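/- arXiv:1603.02856 — 6 statements merged into one kernel-verified Lean document; each statement's English description precedes it below -/
import Mathlib

section
/- The operator y is nilpotent: there exists a natural number n ≥ 1 with y^n = 0 (indeed y^n = 0 for every n > 2‖x‖, since n·y^n = y^n∘x − x∘y^n forces n‖y^n‖ ≤ 2‖x‖‖y^n‖). In particular the spectrum of y is {0}. -/
/-!
Inductively, `[y, x] = y` gives `yⁿ x - x yⁿ = n yⁿ`: the commutator with `x` is a derivation
scaling `y` by one, hence `yⁿ` by `n`. The left side has norm at most `2‖x‖‖yⁿ‖`, so
`n ‖yⁿ‖ ≤ 2‖x‖‖yⁿ‖` and `yⁿ = 0` once `n > 2‖x‖`. A nilpotent element has spectrum inside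
`{0}`, and the spectrum in a nontrivial complex Banach algebra is nonempty.
-/

theorem pow_mul_sub_mul_pow_of_mul_sub_mul_eq_self {R : Type*} [Ring R] {x y : R}
    (h : y * x - x * y = y) (n : ℕ) : y ^ n * x - x * y ^ n = n • y ^ n := by
  induction n with
  | zero => simp
  | succ n ih =>
    calc y ^ (n + 1) * x - x * y ^ (n + 1)
        = y * (y ^ n * x - x * y ^ n) + (y * x - x * y) * y ^ n := by
          rw [pow_succ']; noncomm_ring
      _ = (n + 1) • y ^ (n + 1) := by
          rw [ih, h, mul_smul_comm, ← pow_succ', succ_nsmul]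

theorem eq_zero_of_mul_sub_mul_eq_nsmul {R : Type*} [NormedRing R] [NormedSpace ℝ R] {a x : R}
    {n : ℕ} (h : a * x - x * a = n • a) (hn : 2 * ‖x‖ < n) : a = 0 := by
  have hbound : n * ‖a‖ ≤ 2 * ‖x‖ * ‖a‖ :=
    calc n * ‖a‖ = ‖a * x - x * a‖ := by rw [h, RCLike.norm_nsmul ℝ, nsmul_eq_mul]
      _ ≤ ‖a * x‖ + ‖x * a‖ := norm_sub_le _ _
      _ ≤ ‖a‖ * ‖x‖ + ‖x‖ * ‖a‖ := add_le_add (norm_mul_le _ _) (norm_mul_le _ _)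
      _ = 2 * ‖x‖ * ‖a‖ := by ring
  have hle : ‖a‖ ≤ 0 := by nlinarith [norm_nonneg a]
  exact norm_le_zero_iff.mp hle

theorem spectrum_subset_singleton_zero_of_isNilpotent {𝕜 A : Type*} [Field 𝕜] [Ring A]
    [Algebra 𝕜 A] {a : A} (ha : IsNilpotent a) : spectrum 𝕜 a ⊆ {0} := by
  intro μ hμ
  by_contra hμ0
  have hunit : IsUnit (algebraMap 𝕜 A μ) := (Ne.isUnit hμ0).map (algebraMap 𝕜 A)
  refine spectrum.mem_iff.mp hμ ?_
  rw [sub_eq_add_neg]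
  exact ha.neg.isUnit_add_left_of_commute hunit (Algebra.commutes μ _).symm

/-- Let `H` be a (nontrivial) complex Hilbert space and let `x, y` be bounded
linear operators on `H` satisfying `y ∘ x - x ∘ y = y`.  Then `y` is nilpotent: there is an
`n ≥ 1` with `yⁿ = 0`; indeed `yⁿ = 0` for every `n > 2‖x‖`.  In particular the spectrum of
`y` is `{0}`. -/
theorem y_is_nilpotent_and_spectrum
    {H : Type*} [NormedAddCommGroup H] [InnerProductSpace ℂ H] [CompleteSpace H] [Nontrivial H]
    (x y : H →L[ℂ] H) (hcomm : y ∘L x - x ∘L y = y) :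
    (∃ n : ℕ, 1 ≤ n ∧ y ^ n = 0) ∧
    (∀ n : ℕ, 2 * ‖x‖ < (n : ℝ) → y ^ n = 0) ∧
    spectrum ℂ y = {0} := by
  have hvanish : ∀ n : ℕ, 2 * ‖x‖ < (n : ℝ) → y ^ n = 0 := fun n hn =>
    eq_zero_of_mul_sub_mul_eq_nsmul (pow_mul_sub_mul_pow_of_mul_sub_mul_eq_self hcomm n) hn
  obtain ⟨N, hN⟩ := exists_nat_gt (2 * ‖x‖)
  have hN_pos : 1 ≤ N := by
    exact_mod_cast (by positivity : (0 : ℝ) ≤ 2 * ‖x‖).trans_lt hN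
  have hnil : IsNilpotent y := ⟨N, hvanish N hN⟩
  exact ⟨⟨N, hN_pos, hvanish N hN⟩, hvanish,
    (spectrum.nonempty y).subset_singleton_iff.mp
      (spectrum_subset_singleton_zero_of_isNilpotent hnil)⟩
end

section
/- For every λ ∈ ℂ, the complex (C, d(λ)) is exact at the middle position (that is, ker d₀(λ) = ran d₁(λ)) if and only if the induced operator x̄ − λ : H/R(y) → H/R(y) is injective and the restriction of x−1−λ to ker(y) is a surjective map of ker(y) onto ker(y). -/
/-!
The commutation relation says `(x - λ) ∘ y = y ∘ (x - 1 - λ)`, so the complex is the mapping cone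
of the chain map `(x - 1 - λ, x - λ)` from `y : H → H` to itself, and middle exactness is a purely
algebraic statement about such a commuting square `g ∘ b = b ∘ f`. A cycle `(a, v)` has
`g v = -b a ∈ R(b)`; injectivity of `g` modulo `R(b)` gives `v = b c`, and then `a + f c ∈ ker b`
is hit by `f` on `ker b`, which corrects `c` to a preimage of `(a, v)`. Conversely, the cycles
`(-w, v)` with `g v = b w` and `(w, 0)` with `w ∈ ker b` force the two conditions.
-/

/-- The operator induced on the quotient `H ⧸ S` by an operator leaving `S` invariant. -/
noncomputable def inducedOnQuotient {H : Type*} [NormedAddCommGroup H] [NormedSpace ℂ H]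
    (S : Submodule ℂ H) (x : H →L[ℂ] H) (hx : ∀ v ∈ S, x v ∈ S) :
    (H ⧸ S) →L[ℂ] (H ⧸ S) where
  toLinearMap := Submodule.mapQ S S (x : H →ₗ[ℂ] H) (fun v hv => hx v hv)
  cont := by
    show Continuous (⇑(Submodule.mapQ S S (x : H →ₗ[ℂ] H) fun v hv => hx v hv))
    rw [← S.isOpenQuotientMap_mkQ.continuous_comp_iff]
    have h : (⇑(Submodule.mapQ S S (x : H →ₗ[ℂ] H) fun v hv => hx v hv)) ∘ ⇑S.mkQ
        = ⇑S.mkQ ∘ ⇑x := by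
      funext v
      simp [Submodule.mapQ_apply]
    rw [h]
    exact S.isOpenQuotientMap_mkQ.continuous.comp x.continuous

section

variable {R M N : Type*} [CommRing R] [AddCommGroup M] [Module R M] [AddCommGroup N] [Module R N]

theorem Submodule.mapQ_injective_iff {p : Submodule R M} {q : Submodule R N} {f : M →ₗ[R] N}
    (hf : p ≤ q.comap f) : Function.Injective (p.mapQ q f hf) ↔ q.comap f ≤ p := by
  rw [← LinearMap.ker_eq_bot, ker_mapQ, ← LinearMap.le_ker_iff_map, ker_mkQ]

namespace LinearMap

variable {b : M →ₗ[R] N} {f : M →ₗ[R] M} {g : N →ₗ[R] N}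

theorem range_prod_le_ker_coprod (h : g ∘ₗ b = b ∘ₗ f) :
    range ((-f).prod b) ≤ ker (b.coprod g) := by
  rintro _ ⟨c, rfl⟩
  have hgb : g (b c) = b (f c) := congr($h c)
  simp [hgb]

theorem comap_range_le_range_of_ker_coprod_le (hex : ker (b.coprod g) ≤ range ((-f).prod b)) :
    (range b).comap g ≤ range b := by
  rintro v ⟨w, hw⟩
  obtain ⟨c, hc⟩ := hex (show (-w, v) ∈ ker (b.coprod g) by simp [hw])
  exact ⟨c, congr_arg Prod.snd hc⟩

theorem surjOn_ker_of_ker_coprod_le (hex : ker (b.coprod g) ≤ range ((-f).prod b)) :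
    Set.SurjOn f (ker b) (ker b) := by
  intro w hw
  obtain ⟨c, hc⟩ := hex (show (w, 0) ∈ ker (b.coprod g) by simpa using hw)
  have hfc : -f c = w := congr_arg Prod.fst hc
  have hbc : b c = 0 := congr_arg Prod.snd hc
  exact ⟨-c, by simp [hbc], by simp [← hfc]⟩

theorem ker_coprod_le_range_prod (h : g ∘ₗ b = b ∘ₗ f) (hg : (range b).comap g ≤ range b)
    (hf : Set.SurjOn f (ker b) (ker b)) : ker (b.coprod g) ≤ range ((-f).prod b) := by
  rintro ⟨a, v⟩ hav
  rw [mem_ker, coprod_apply] at hav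
  obtain ⟨c, rfl⟩ : v ∈ range b := hg ⟨-a, by simp [eq_neg_of_add_eq_zero_right hav]⟩
  have hgb : g (b c) = b (f c) := congr($h c)
  obtain ⟨k, hk, hfk⟩ := hf (show a + f c ∈ ker b by simpa [← hgb] using hav)
  have hbk : b k = 0 := hk
  refine ⟨c - k, Prod.ext ?_ ?_⟩ <;> simp [hfk, hbk]

theorem ker_coprod_eq_range_prod_iff (h : g ∘ₗ b = b ∘ₗ f) :
    ker (b.coprod g) = range ((-f).prod b) ↔
      (range b).comap g ≤ range b ∧ Set.SurjOn f (ker b) (ker b) :=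
  ⟨fun hex => ⟨comap_range_le_range_of_ker_coprod_le hex.le, surjOn_ker_of_ker_coprod_le hex.le⟩,
    fun ⟨hg, hf⟩ => (ker_coprod_le_range_prod h hg hf).antisymm (range_prod_le_ker_coprod h)⟩

end LinearMap

end

theorem middle_exactness_iff_general
    {H : Type*} [NormedAddCommGroup H] [InnerProductSpace ℂ H]
    (x y : H →L[ℂ] H) (hcomm : y ∘L x - x ∘L y = y)
    (hran : ∀ v ∈ LinearMap.range (y : H →ₗ[ℂ] H), x v ∈ LinearMap.range (y : H →ₗ[ℂ] H)) :
    ∀ l : ℂ,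
      LinearMap.ker (y.coprod (x - l • (1 : H →L[ℂ] H)) : H × H →ₗ[ℂ] H) =
          LinearMap.range ((-(x - 1 - l • (1 : H →L[ℂ] H))).prod y : H →ₗ[ℂ] H × H) ↔
        (Function.Injective
            (fun v : H ⧸ LinearMap.range (y : H →ₗ[ℂ] H) =>
              inducedOnQuotient (LinearMap.range (y : H →ₗ[ℂ] H)) x hran v - l • v) ∧
          Set.SurjOn ⇑(x - 1 - l • (1 : H →L[ℂ] H))
            (LinearMap.ker (y : H →ₗ[ℂ] H) : Set H) (LinearMap.ker (y : H →ₗ[ℂ] H) : Set H)) := by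
  intro l
  set S := LinearMap.range (y : H →ₗ[ℂ] H)
  have hS : S ≤ S.comap (x - l • (1 : H →L[ℂ] H) : H →ₗ[ℂ] H) := fun v hv => by
    simpa using S.sub_mem (hran v hv) (S.smul_mem l hv)
  have hquot : (fun v : H ⧸ S => inducedOnQuotient S x hran v - l • v) =
      S.mapQ S (x - l • (1 : H →L[ℂ] H) : H →ₗ[ℂ] H) hS := by
    ext v
    obtain ⟨v, rfl⟩ := S.mkQ_surjective v
    rfl
  have hinter : ((x - l • (1 : H →L[ℂ] H) : H →L[ℂ] H) : H →ₗ[ℂ] H) ∘ₗ (y : H →ₗ[ℂ] H) =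
      (y : H →ₗ[ℂ] H) ∘ₗ (x - 1 - l • (1 : H →L[ℂ] H) : H →L[ℂ] H) := by
    ext v
    have hyx : y (x v) = x (y v) + y v := by
      simpa [sub_eq_iff_eq_add'] using congr($hcomm v)
    simp [hyx]
  rw [hquot, Submodule.mapQ_injective_iff, ContinuousLinearMap.coe_coprod,
    ContinuousLinearMap.coe_prod, ContinuousLinearMap.toLinearMap_neg,
    LinearMap.ker_coprod_eq_range_prod_iff hinter]
  rfl

/-- Let `H` be a complex Hilbert space, `x, y` bounded operators on `H` with
`y ∘ x - x ∘ y = y` and `R(y)` closed.  For every `λ ∈ ℂ`, the complex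
`0 → H →d₁(λ) H ⊕ H →d₀(λ) H → 0` is exact in the middle (i.e. `ker d₀(λ) = ran d₁(λ)`)
iff the operator `x̄ - λ` induced on `H ⧸ R(y)` is injective and the restriction of
`x - 1 - λ` to `ker y` is a surjection of `ker y` onto `ker y`. -/
theorem middle_exactness_iff
    {H : Type*} [NormedAddCommGroup H] [InnerProductSpace ℂ H] [CompleteSpace H]
    (x y : H →L[ℂ] H) (hcomm : y ∘L x - x ∘L y = y)
    (hclosed : IsClosed ((LinearMap.range (y : H →ₗ[ℂ] H) : Submodule ℂ H) : Set H))
    (hran : ∀ v ∈ LinearMap.range (y : H →ₗ[ℂ] H), x v ∈ LinearMap.range (y : H →ₗ[ℂ] H)) :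
    ∀ l : ℂ,
      LinearMap.ker (y.coprod (x - l • (1 : H →L[ℂ] H)) : H × H →ₗ[ℂ] H) =
          LinearMap.range ((-(x - 1 - l • (1 : H →L[ℂ] H))).prod y : H →ₗ[ℂ] H × H) ↔
        (Function.Injective
            (fun v : H ⧸ LinearMap.range (y : H →ₗ[ℂ] H) =>
              inducedOnQuotient (LinearMap.range (y : H →ₗ[ℂ] H)) x hran v - l • v) ∧
          Set.SurjOn ⇑(x - 1 - l • (1 : H →L[ℂ] H))
            (LinearMap.ker (y : H →ₗ[ℂ] H) : Set H) (LinearMap.ker (y : H →ₗ[ℂ] H) : Set H)) :=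
  middle_exactness_iff_general x y hcomm hran
end

section
/- The set of λ ∈ ℂ for which the complex (C, d(λ)) fails to be exact (i.e., d₁(λ) is not injective, or ker d₀(λ) ≠ ran d₁(λ), or d₀(λ) is not surjective) equals σ((x−1)|_{ker y}) ∪ σ(x̄), the union of the spectrum of the restriction of x−1 to the Hilbert space ker(y) and the spectrum of the operator x̄ induced by x on the Banach space H/R(y). (Equivalently, in terms of the dual basis of {y,x}, the joint spectrum of the Lie algebra is Sp((y,x),H) = {0} × (Sp(x−1, ker y) ∪ Sp(x̄, H/R(y))).) -/
/-- The restriction of an operator to an invariant closed subspace. -/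
def restrictOp {H : Type*} [NormedAddCommGroup H] [NormedSpace ℂ H]
    (K : Submodule ℂ H) (x : H →L[ℂ] H) (hx : ∀ v ∈ K, x v ∈ K) : K →L[ℂ] K :=
  (x.comp K.subtypeL).codRestrict K (fun v => hx v v.2)

open Function

namespace LinearMap

variable {R E F : Type*} [Ring R] [AddCommGroup E] [Module R E] [AddCommGroup F] [Module R F]
  {y : E →ₗ[R] F} {u : E →ₗ[R] E} {v : F →ₗ[R] F}

theorem injective_neg_prod_iff_injective_restrict (hu : ∀ e ∈ ker y, u e ∈ ker y) :
    Injective ((-u).prod y) ↔ Injective (u.restrict hu) := by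
  simp only [injective_iff_map_eq_zero, Subtype.forall, mem_ker, Subtype.ext_iff,
    coe_restrict_apply, prod_apply, Function.prod_apply, Prod.ext_iff, neg_apply, neg_eq_zero,
    Prod.fst_zero, Prod.snd_zero, Submodule.coe_zero, and_imp]
  exact forall_congr' fun _ => ⟨fun h h1 h2 => h h2 h1, fun h h1 h2 => h h2 h1⟩

theorem surjective_coprod_iff_surjective_mapQ (hv : ∀ f ∈ range y, v f ∈ range y) :
    Surjective (y.coprod v) ↔ Surjective ((range y).mapQ (range y) v hv) := by
  rw [← range_eq_top, ← range_eq_top, range_coprod, Submodule.range_mapQ,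
    Submodule.map_mkQ_eq_top]

theorem range_neg_prod_le_ker_coprod (h : ∀ e, y (u e) = v (y e)) :
    range ((-u).prod y) ≤ ker (y.coprod v) := by
  rintro _ ⟨c, rfl⟩
  simp [h]

theorem surjective_restrict_of_ker_coprod_le (hu : ∀ e ∈ ker y, u e ∈ ker y)
    (hle : ker (y.coprod v) ≤ range ((-u).prod y)) : Surjective (u.restrict hu) := by
  rintro ⟨k, hk⟩
  obtain ⟨c, hc⟩ := hle (x := (-k, 0)) (by simpa using hk)
  simp only [prod_apply, Function.prod_apply, neg_apply, Prod.mk.injEq, neg_inj] at hc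
  exact ⟨⟨c, hc.2⟩, Subtype.ext hc.1⟩

theorem injective_mapQ_of_ker_coprod_le (hv : ∀ f ∈ range y, v f ∈ range y)
    (hle : ker (y.coprod v) ≤ range ((-u).prod y)) :
    Injective ((range y).mapQ (range y) v hv) := by
  rw [← ker_eq_bot, Submodule.eq_bot_iff]
  intro q hq
  obtain ⟨b, rfl⟩ := Submodule.Quotient.mk_surjective _ q
  obtain ⟨a, ha⟩ : v b ∈ range y := by simpa [Submodule.Quotient.mk_eq_zero] using hq
  obtain ⟨c, hc⟩ := hle (x := (-a, b)) (by simp [ha])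
  simp only [prod_apply, Function.prod_apply, Prod.mk.injEq] at hc
  exact (Submodule.Quotient.mk_eq_zero _).2 ⟨c, hc.2⟩

theorem ker_coprod_le_of_surjective_of_injective (h : ∀ e, y (u e) = v (y e))
    (hu : ∀ e ∈ ker y, u e ∈ ker y) (hv : ∀ f ∈ range y, v f ∈ range y)
    (hsurj : Surjective (u.restrict hu)) (hinj : Injective ((range y).mapQ (range y) v hv)) :
    ker (y.coprod v) ≤ range ((-u).prod y) := by
  rintro ⟨a, b⟩ hab
  simp only [mem_ker, coprod_apply] at hab
  obtain ⟨c, rfl⟩ : b ∈ range y := by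
    rw [← Submodule.Quotient.mk_eq_zero]
    refine hinj ?_
    simpa [Submodule.Quotient.mk_eq_zero] using ⟨-a, by simp [eq_neg_of_add_eq_zero_right hab]⟩
  have hker : -(a + u c) ∈ ker y := by
    rw [mem_ker, map_neg, map_add, h, hab, neg_zero]
  obtain ⟨⟨k, hk⟩, hck⟩ := hsurj ⟨_, hker⟩
  have huk : u k = -(a + u c) := congrArg Subtype.val hck
  exact ⟨c + k, by simp [huk, mem_ker.1 hk]⟩

theorem ker_coprod_eq_range_neg_prod_iff (h : ∀ e, y (u e) = v (y e))
    (hu : ∀ e ∈ ker y, u e ∈ ker y) (hv : ∀ f ∈ range y, v f ∈ range y) :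
    ker (y.coprod v) = range ((-u).prod y) ↔
      Surjective (u.restrict hu) ∧ Injective ((range y).mapQ (range y) v hv) := by
  refine ⟨fun heq => ⟨surjective_restrict_of_ker_coprod_le hu heq.le,
    injective_mapQ_of_ker_coprod_le hv heq.le⟩, fun ⟨hsurj, hinj⟩ => ?_⟩
  exact le_antisymm (ker_coprod_le_of_surjective_of_injective h hu hv hsurj hinj)
    (range_neg_prod_le_ker_coprod h)

theorem exact_neg_prod_coprod_iff (h : ∀ e, y (u e) = v (y e))
    (hu : ∀ e ∈ ker y, u e ∈ ker y) (hv : ∀ f ∈ range y, v f ∈ range y) :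
    (Injective ((-u).prod y) ∧ ker (y.coprod v) = range ((-u).prod y) ∧
        Surjective (y.coprod v)) ↔
      Bijective (u.restrict hu) ∧ Bijective ((range y).mapQ (range y) v hv) := by
  rw [injective_neg_prod_iff_injective_restrict hu, ker_coprod_eq_range_neg_prod_iff h hu hv,
    surjective_coprod_iff_surjective_mapQ hv, Bijective, Bijective]
  tauto

end LinearMap

theorem ContinuousLinearMap.mem_spectrum_iff_not_bijective {𝕜 E : Type*}
    [NontriviallyNormedField 𝕜] [NormedAddCommGroup E] [NormedSpace 𝕜 E] [CompleteSpace E]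
    {T : E →L[𝕜] E} {l : 𝕜} : l ∈ spectrum 𝕜 T ↔ ¬ Bijective (T - l • (1 : E →L[𝕜] E)) := by
  rw [spectrum.mem_iff, IsUnit.sub_iff, Algebra.algebraMap_eq_smul_one, isUnit_iff_bijective]

section

variable {H : Type*} [NormedAddCommGroup H] [NormedSpace ℂ H]

theorem sub_smul_one_apply_mem {K : Submodule ℂ H} {x : H →L[ℂ] H} (hx : ∀ v ∈ K, x v ∈ K)
    (l : ℂ) : ∀ v ∈ K, (x - l • 1) v ∈ K :=
  fun v hv => K.sub_mem (hx v hv) (K.smul_mem l hv)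

@[simp]
theorem coe_restrictOp_apply (K : Submodule ℂ H) (x : H →L[ℂ] H) (hx : ∀ v ∈ K, x v ∈ K) (v : K) :
    (restrictOp K x hx v : H) = x v := rfl

theorem restrictOp_sub_smul_one (K : Submodule ℂ H) (x : H →L[ℂ] H) (hx : ∀ v ∈ K, x v ∈ K)
    (l : ℂ) :
    restrictOp K x hx - l • 1 = restrictOp K (x - l • 1) (sub_smul_one_apply_mem hx l) := by
  ext; simp

theorem coe_restrictOp (K : Submodule ℂ H) (x : H →L[ℂ] H) (hx : ∀ v ∈ K, x v ∈ K) :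
    (restrictOp K x hx : K →ₗ[ℂ] K) = (x : H →ₗ[ℂ] H).restrict hx := rfl

theorem inducedOnQuotient_sub_smul_one (S : Submodule ℂ H) (x : H →L[ℂ] H)
    (hx : ∀ v ∈ S, x v ∈ S) (l : ℂ) :
    inducedOnQuotient S x hx - l • 1 =
      inducedOnQuotient S (x - l • 1) (sub_smul_one_apply_mem hx l) := by
  ext q
  obtain ⟨v, rfl⟩ := Submodule.Quotient.mk_surjective S q
  simp [inducedOnQuotient]

theorem coe_inducedOnQuotient (S : Submodule ℂ H) (x : H →L[ℂ] H) (hx : ∀ v ∈ S, x v ∈ S) :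
    (inducedOnQuotient S x hx : (H ⧸ S) →ₗ[ℂ] H ⧸ S) =
      S.mapQ S (x : H →ₗ[ℂ] H) (fun v hv => hx v hv) := rfl

end

/-- Let `H` be a complex Hilbert space, `x, y` bounded operators on `H` with
`y ∘ x - x ∘ y = y` and `R(y)` closed.  The set of `λ ∈ ℂ` at which the complex
`0 → H →d₁(λ) H ⊕ H →d₀(λ) H → 0` fails to be exact equals
`σ((x-1)|_{ker y}) ∪ σ(x̄)`, where `x̄` is the operator induced by `x` on `H ⧸ R(y)`.
Equivalently, `Sp((y,x),H) = {0} × (Sp(x-1, ker y) ∪ Sp(x̄, H ⧸ R(y)))`. -/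
theorem joint_spectrum_eq
    {H : Type*} [NormedAddCommGroup H] [InnerProductSpace ℂ H] [CompleteSpace H]
    (x y : H →L[ℂ] H) (hcomm : y ∘L x - x ∘L y = y)
    (hclosed : IsClosed ((LinearMap.range (y : H →ₗ[ℂ] H) : Submodule ℂ H) : Set H))
    (hran : ∀ v ∈ LinearMap.range (y : H →ₗ[ℂ] H), x v ∈ LinearMap.range (y : H →ₗ[ℂ] H))
    (hker : ∀ a ∈ LinearMap.ker (y : H →ₗ[ℂ] H), (x - 1) a ∈ LinearMap.ker (y : H →ₗ[ℂ] H)) :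
    {l : ℂ |
        ¬ (Function.Injective ⇑((-(x - 1 - l • (1 : H →L[ℂ] H))).prod y) ∧
          LinearMap.ker ((y.coprod (x - l • (1 : H →L[ℂ] H)) : H × H →L[ℂ] H) : H × H →ₗ[ℂ] H) =
            LinearMap.range (((-(x - 1 - l • (1 : H →L[ℂ] H))).prod y : H →L[ℂ] H × H) : H →ₗ[ℂ] H × H) ∧
          Function.Surjective ⇑(y.coprod (x - l • (1 : H →L[ℂ] H))))} =
      spectrum ℂ (restrictOp (LinearMap.ker (y : H →ₗ[ℂ] H)) (x - 1) hker) ∪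
        spectrum ℂ (inducedOnQuotient (LinearMap.range (y : H →ₗ[ℂ] H)) x hran) := by
  ext l
  have intertwine : ∀ c, y ((x - 1 - l • 1) c) = (x - l • 1) (y c) := fun c => by
    have hcomm_c := congr($hcomm c)
    simp only [sub_apply, ContinuousLinearMap.comp_apply] at hcomm_c
    simp only [sub_apply, smul_apply, one_apply_eq_self, map_sub, map_smul]
    linear_combination (norm := module) hcomm_c
  have : CompleteSpace (LinearMap.ker (y : H →ₗ[ℂ] H)) := y.isClosed_ker.completeSpace_coe
  -- without it `H ⧸ R(y)` is only seminormed and the open mapping theorem does not apply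
  have : IsClosed ((LinearMap.range (y : H →ₗ[ℂ] H) : Submodule ℂ H) : Set H) := hclosed
  rw [Set.mem_union, ContinuousLinearMap.mem_spectrum_iff_not_bijective,
    ContinuousLinearMap.mem_spectrum_iff_not_bijective, restrictOp_sub_smul_one,
    inducedOnQuotient_sub_smul_one, ← not_and_or, Set.mem_ofPred_eq, not_iff_not]
  rw [← ContinuousLinearMap.coe_coe (restrictOp _ _ _), coe_restrictOp,
    ← ContinuousLinearMap.coe_coe (inducedOnQuotient _ _ _), coe_inducedOnQuotient,
    ← ContinuousLinearMap.coe_coe ((-(x - 1 - l • 1)).prod y), ContinuousLinearMap.coe_prod,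
    ContinuousLinearMap.toLinearMap_neg, ← ContinuousLinearMap.coe_coe (y.coprod _),
    ContinuousLinearMap.coe_coprod]
  exact LinearMap.exact_neg_prod_coprod_iff intertwine _ _
end

section
/- For every λ ∈ ℂ, the range of d₁(λ) is a closed subspace of H ⊕ H if and only if (x−1−λ)(ker(y)) is a closed subspace of ker(y). -/
/-!
Write `A = -(x - 1 - λ)`. Since `R(y)` is closed, `y` has a bounded generalized inverse `σ`
(`y σ y = y`): invert `y` on `(ker y)ᗮ` and precompose with the projection onto `R(y)`.
Then `(u, v)` lies in the range of `(A, y)` iff `v ∈ R(y)` and `u - A σ v ∈ A(ker y)`, so that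
range is the preimage of `A(ker y) × R(y)` under a continuous map. Conversely `A(ker y)` is the
slice of the range of `(A, y)` at second coordinate `0`.
-/

open Set

theorem Submodule.closedComplemented_of_isClosed {𝕜 F : Type*} [RCLike 𝕜]
    [NormedAddCommGroup F] [InnerProductSpace 𝕜 F] [CompleteSpace F] {K : Submodule 𝕜 F}
    (hK : IsClosed (K : Set F)) : K.ClosedComplemented :=
  have : CompleteSpace K := hK.completeSpace_coe
  ⟨K.orthogonalProjectionOnto, K.orthogonalProjectionOnto_mem_subspace_eq_self⟩

namespace ContinuousLinearMap

section Ring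

variable {R M N P : Type*} [Ring R]
  [TopologicalSpace M] [AddCommGroup M] [Module R M]
  [TopologicalSpace N] [AddCommGroup N] [Module R N]
  [TopologicalSpace P] [AddCommGroup P] [Module R P]

theorem image_ker_eq_preimage_range_prod (A : M →L[R] N) (B : M →L[R] P) :
    A '' (LinearMap.ker (B : M →ₗ[R] P) : Set M) =
      (fun a => (a, (0 : P))) ⁻¹' range (A.prod B) := by
  ext a
  simp [Prod.ext_iff, and_comm]

theorem range_prod_eq_preimage_of_comp_comp_eq (A : M →L[R] N) {B : M →L[R] P}
    {σ : P →L[R] M} (hσ : B ∘L σ ∘L B = B) :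
    range (A.prod B) = (fun q : N × P => (q.1 - A (σ q.2), q.2)) ⁻¹'
      ((A '' (LinearMap.ker (B : M →ₗ[R] P) : Set M)) ×ˢ range B) := by
  have hσc : ∀ c, B (σ (B c)) = B c := fun c => congr($hσ c)
  ext ⟨a, b⟩
  constructor
  · rintro ⟨c, hc⟩
    obtain ⟨rfl, rfl⟩ := Prod.ext_iff.mp hc
    exact ⟨⟨c - σ (B c), by simp [hσc], by simp⟩, c, rfl⟩
  · rintro ⟨⟨k, hk, hak⟩, c, rfl⟩
    have hk : B k = 0 := hk
    refine ⟨k + σ (B c), Prod.ext ?_ ?_⟩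
    · simpa [eq_sub_iff_add_eq] using hak
    · simp [hk, hσc]

theorem isClosed_range_prod_iff_of_comp_comp_eq [ContinuousSub N]
    (A : M →L[R] N) {B : M →L[R] P} (hB : IsClosed (range B))
    {σ : P →L[R] M} (hσ : B ∘L σ ∘L B = B) :
    IsClosed (range (A.prod B)) ↔ IsClosed (A '' (LinearMap.ker (B : M →ₗ[R] P) : Set M)) := by
  refine ⟨fun h => ?_, fun h => ?_⟩
  · rw [image_ker_eq_preimage_range_prod]
    exact h.preimage (by fun_prop)
  · rw [range_prod_eq_preimage_of_comp_comp_eq A hσ]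
    exact (h.prod hB).preimage (by fun_prop)

end Ring

theorem exists_comp_comp_eq_of_isClosed_range {𝕜 E F : Type*} [RCLike 𝕜]
    [NormedAddCommGroup E] [InnerProductSpace 𝕜 E] [CompleteSpace E]
    [NormedAddCommGroup F] [InnerProductSpace 𝕜 F] [CompleteSpace F]
    {B : E →L[𝕜] F} (hB : IsClosed (range B)) :
    ∃ σ : F →L[𝕜] E, B ∘L σ ∘L B = B := by
  set K := LinearMap.ker (B : E →ₗ[𝕜] F)
  have : CompleteSpace K := B.isClosed_ker.completeSpace_coe
  have : CompleteSpace Kᗮ := K.isClosed_orthogonal.completeSpace_coe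
  set f : Kᗮ →L[𝕜] F := B ∘L Kᗮ.subtypeL
  have hBf : ∀ c, B c = f (Kᗮ.orthogonalProjectionOnto c) := by
    intro c
    have hc : c - Kᗮ.starProjection c ∈ K :=
      (Submodule.orthogonal_orthogonal K).le (Kᗮ.sub_starProjection_mem_orthogonal c)
    rwa [LinearMap.mem_ker, coe_coe, map_sub, sub_eq_zero] at hc
  have hf_range : range f = range B :=
    (range_comp_subset_range _ _).antisymm fun _ ⟨c, hc⟩ => ⟨_, (hBf c).symm.trans hc⟩
  have hf_inj : Function.Injective f := by
    refine (injective_iff_map_eq_zero f).2 fun p hp => Subtype.ext ?_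
    exact Submodule.disjoint_def.1 K.orthogonal_disjoint p hp p.2
  obtain ⟨g, hg⟩ := HasLeftInverse.of_injective_of_isClosed_range_of_closedComplement_range hf_inj
    (hf_range ▸ hB)
    (Submodule.closedComplemented_of_isClosed (by rwa [LinearMap.coe_range, coe_coe, hf_range]))
  refine ⟨Kᗮ.subtypeL ∘L g, ext fun c => ?_⟩
  change f (g (B c)) = B c
  rw [hBf c, hg]

end ContinuousLinearMap

theorem range_d1_closed_iff_general
    {H : Type*} [NormedAddCommGroup H] [InnerProductSpace ℂ H] [CompleteSpace H]
    (x y : H →L[ℂ] H)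
    (hclosed : IsClosed ((LinearMap.range (y : H →ₗ[ℂ] H) : Submodule ℂ H) : Set H)) :
    ∀ l : ℂ,
      IsClosed (Set.range ⇑((-(x - 1 - l • (1 : H →L[ℂ] H))).prod y)) ↔
      IsClosed (⇑(x - 1 - l • (1 : H →L[ℂ] H)) '' (LinearMap.ker (y : H →ₗ[ℂ] H) : Set H)) := by
  intro l
  rw [LinearMap.coe_range, ContinuousLinearMap.coe_coe] at hclosed
  obtain ⟨σ, hσ⟩ := ContinuousLinearMap.exists_comp_comp_eq_of_isClosed_range hclosed
  set T := x - 1 - l • (1 : H →L[ℂ] H)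
  rw [ContinuousLinearMap.isClosed_range_prod_iff_of_comp_comp_eq _ hclosed hσ,
    show ⇑(-T) = Homeomorph.neg H ∘ T from rfl, image_comp, Homeomorph.isClosed_image]

/-- Let `H` be a complex Hilbert space, `x, y` bounded operators on `H` with
`y ∘ x - x ∘ y = y` and `R(y)` closed.  For every `λ ∈ ℂ`, the range of
`d₁(λ) : H → H ⊕ H`, `c ↦ (-(x - 1 - λ)(c), y(c))`, is closed in `H ⊕ H` iff
`(x - 1 - λ)(ker y)` is closed (as a subspace of the closed subspace `ker y`,
equivalently closed in `H`). -/
theorem range_d1_closed_iff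
    {H : Type*} [NormedAddCommGroup H] [InnerProductSpace ℂ H] [CompleteSpace H]
    (x y : H →L[ℂ] H) (hcomm : y ∘L x - x ∘L y = y)
    (hclosed : IsClosed ((LinearMap.range (y : H →ₗ[ℂ] H) : Submodule ℂ H) : Set H)) :
    ∀ l : ℂ,
      IsClosed (Set.range ⇑((-(x - 1 - l • (1 : H →L[ℂ] H))).prod y)) ↔
      IsClosed (⇑(x - 1 - l • (1 : H →L[ℂ] H)) '' (LinearMap.ker (y : H →ₗ[ℂ] H) : Set H)) :=
  range_d1_closed_iff_general x y hclosed
end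

section
/- With x₁₁ the restriction of x to the closed invariant subspace R(y) and x₃₃ = P_{ker(y)^⊥} ∘ x restricted to ker(y)^⊥ (the compression of x to ker(y)^⊥), the intertwining relation ȳ ∘ x₃₃ − x₁₁ ∘ ȳ = ȳ holds, where ȳ : ker(y)^⊥ → R(y) is the (invertible) restriction of y; consequently x₃₃ = I + ȳ⁻¹ ∘ x₁₁ ∘ ȳ and σ(x₃₃) = σ(x₁₁) + 1. -/
/-- The compression of an operator to a subspace admitting an orthogonal projection. -/
noncomputable def compressOp {H : Type*} [NormedAddCommGroup H] [InnerProductSpace ℂ H]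
    (K : Submodule ℂ H) [Submodule.HasOrthogonalProjection K] (x : H →L[ℂ] H) : K →L[ℂ] K :=
  (Submodule.orthogonalProjectionOnto K).comp (x.comp K.subtypeL)

open ContinuousLinearMap Submodule

section OrthogonalKer

variable {𝕜 E F : Type*} [RCLike 𝕜] [NormedAddCommGroup E] [InnerProductSpace 𝕜 E]
  [CompleteSpace E] [NormedAddCommGroup F] [NormedSpace 𝕜 F]

theorem apply_starProjection_orthogonal_ker (T : E →L[𝕜] F) (u : E) :
    T ((LinearMap.ker (T : E →ₗ[𝕜] F))ᗮ.starProjection u) = T u := by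
  have hmem : u - (LinearMap.ker (T : E →ₗ[𝕜] F))ᗮ.starProjection u ∈
      LinearMap.ker (T : E →ₗ[𝕜] F) :=
    (orthogonal_orthogonal _).le (sub_starProjection_mem_orthogonal u)
  rw [LinearMap.mem_ker, map_sub, sub_eq_zero] at hmem
  exact hmem.symm

variable [CompleteSpace F]

noncomputable def orthogonalKerEquivRange (T : E →L[𝕜] F)
    (hT : IsClosed (LinearMap.range (T : E →ₗ[𝕜] F) : Set F)) :
    (LinearMap.ker (T : E →ₗ[𝕜] F))ᗮ ≃L[𝕜] LinearMap.range (T : E →ₗ[𝕜] F) :=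
  have : CompleteSpace (LinearMap.range (T : E →ₗ[𝕜] F)) := hT.completeSpace_coe
  .ofBijective ((T ∘L subtypeL _).codRestrict _ fun v => LinearMap.mem_range_self _ (v : E))
    (LinearMap.ker_eq_bot'.mpr fun v hv =>
      Subtype.ext <| inner_self_eq_zero.mp <|
        (mem_orthogonal' _ _).mp v.2 v (congrArg Subtype.val hv))
    (LinearMap.range_eq_top.mpr fun ⟨_, u, hu⟩ =>
      ⟨orthogonalProjectionOnto _ u,
        Subtype.ext ((apply_starProjection_orthogonal_ker T u).trans hu)⟩)

end OrthogonalKer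

theorem apply_compressOp_orthogonal_ker {H F : Type*} [NormedAddCommGroup H]
    [InnerProductSpace ℂ H] [CompleteSpace H] [NormedAddCommGroup F] [NormedSpace ℂ F]
    (x : H →L[ℂ] H) (y : H →L[ℂ] F) (v : (LinearMap.ker (y : H →ₗ[ℂ] F))ᗮ) :
    y (compressOp (LinearMap.ker (y : H →ₗ[ℂ] F))ᗮ x v) = y (x v) :=
  apply_starProjection_orthogonal_ker y (x v)

section Intertwining

variable {E F : Type*} [NormedAddCommGroup E] [NormedSpace ℂ E] [NormedAddCommGroup F]
  [NormedSpace ℂ F] (e : E ≃L[ℂ] F) {a : E →L[ℂ] E} {b : F →L[ℂ] F}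

theorem eq_add_symm_of_intertwining (h : ∀ v, e (a v) - b (e v) = e v) (v : E) :
    a v = v + e.symm (b (e v)) := by
  apply e.injective
  rw [map_add, e.apply_symm_apply]
  exact eq_add_of_sub_eq (h v)

theorem spectrum_eq_image_add_one_of_intertwining (h : ∀ v, e (a v) - b (e v) = e v) :
    spectrum ℂ a = (fun z : ℂ => z + 1) '' spectrum ℂ b := by
  have ha : a = algebraMap ℂ _ 1 + e.symm.conjContinuousAlgEquiv b := by
    ext v
    simp [eq_add_symm_of_intertwining e h v]
  rw [ha, ← spectrum.vadd_eq, AlgEquiv.spectrum_eq]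
  ext z
  simp only [Set.mem_vadd_set, Set.mem_image, vadd_eq_add]
  exact ⟨fun ⟨w, hw, hz⟩ => ⟨w, hw, (add_comm w 1).trans hz⟩,
    fun ⟨w, hw, hz⟩ => ⟨w, hw, (add_comm 1 w).trans hz⟩⟩

end Intertwining

theorem intertwining_and_spectrum_shift_general
    {H : Type*} [NormedAddCommGroup H] [InnerProductSpace ℂ H] [CompleteSpace H]
    (x y : H →L[ℂ] H) (hcomm : y ∘L x - x ∘L y = y)
    (hclosed : IsClosed ((LinearMap.range (y : H →ₗ[ℂ] H) : Submodule ℂ H) : Set H))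
    (hran : ∀ v ∈ LinearMap.range (y : H →ₗ[ℂ] H), x v ∈ LinearMap.range (y : H →ₗ[ℂ] H)) :
    (∀ v : (LinearMap.ker (y : H →ₗ[ℂ] H))ᗮ,
        y ↑(compressOp (LinearMap.ker (y : H →ₗ[ℂ] H))ᗮ x v) -
            ↑(restrictOp (LinearMap.range (y : H →ₗ[ℂ] H)) x hran
              ⟨y ↑v, LinearMap.mem_range_self (y : H →ₗ[ℂ] H) (v : H)⟩) =
          y ↑v) ∧
    (∃ e : (LinearMap.ker (y : H →ₗ[ℂ] H))ᗮ ≃L[ℂ] LinearMap.range (y : H →ₗ[ℂ] H),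
        (∀ v : (LinearMap.ker (y : H →ₗ[ℂ] H))ᗮ, (e v : H) = y ↑v) ∧
        ∀ v : (LinearMap.ker (y : H →ₗ[ℂ] H))ᗮ,
          compressOp (LinearMap.ker (y : H →ₗ[ℂ] H))ᗮ x v =
            v + e.symm (restrictOp (LinearMap.range (y : H →ₗ[ℂ] H)) x hran (e v))) ∧
    spectrum ℂ (compressOp (LinearMap.ker (y : H →ₗ[ℂ] H))ᗮ x) =
      (fun z : ℂ => z + 1) '' spectrum ℂ (restrictOp (LinearMap.range (y : H →ₗ[ℂ] H)) x hran) := by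
  have intertwining : ∀ v : (LinearMap.ker (y : H →ₗ[ℂ] H))ᗮ,
      y (compressOp _ x v) - x (y v) = y v := fun v => by
    rw [apply_compressOp_orthogonal_ker]
    simpa using congr($hcomm (v : H))
  set e := orthogonalKerEquivRange y hclosed
  have he : ∀ v, e (compressOp _ x v) - restrictOp _ x hran (e v) = e v :=
    fun v => Subtype.ext (intertwining v)
  exact ⟨intertwining, ⟨e, fun _ => rfl, eq_add_symm_of_intertwining e he⟩,
    spectrum_eq_image_add_one_of_intertwining e he⟩

/-- Let `H` be a complex Hilbert space, `x, y` bounded operators on `H`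
with `y ∘ x - x ∘ y = y`, `R(y)` closed and `y² = 0`.  Let `x₁₁` be the restriction of
`x` to the invariant subspace `R(y)` and `x₃₃` the compression of `x` to `(ker y)ᗮ`.
Then the intertwining relation `ȳ ∘ x₃₃ - x₁₁ ∘ ȳ = ȳ` holds, where
`ȳ : (ker y)ᗮ → R(y)` is the (invertible) restriction of `y`; consequently
`x₃₃ = I + ȳ⁻¹ ∘ x₁₁ ∘ ȳ` and `σ(x₃₃) = σ(x₁₁) + 1`. -/
theorem intertwining_and_spectrum_shift
    {H : Type*} [NormedAddCommGroup H] [InnerProductSpace ℂ H] [CompleteSpace H]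
    (x y : H →L[ℂ] H) (hcomm : y ∘L x - x ∘L y = y)
    (hclosed : IsClosed ((LinearMap.range (y : H →ₗ[ℂ] H) : Submodule ℂ H) : Set H))
    (hy2 : y ∘L y = 0)
    (hran : ∀ v ∈ LinearMap.range (y : H →ₗ[ℂ] H), x v ∈ LinearMap.range (y : H →ₗ[ℂ] H))
    [Submodule.HasOrthogonalProjection (LinearMap.ker (y : H →ₗ[ℂ] H))ᗮ] :
    (∀ v : (LinearMap.ker (y : H →ₗ[ℂ] H))ᗮ,
        y ↑(compressOp (LinearMap.ker (y : H →ₗ[ℂ] H))ᗮ x v) -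
            ↑(restrictOp (LinearMap.range (y : H →ₗ[ℂ] H)) x hran
              ⟨y ↑v, LinearMap.mem_range_self (y : H →ₗ[ℂ] H) (v : H)⟩) =
          y ↑v) ∧
    (∃ e : (LinearMap.ker (y : H →ₗ[ℂ] H))ᗮ ≃L[ℂ] LinearMap.range (y : H →ₗ[ℂ] H),
        (∀ v : (LinearMap.ker (y : H →ₗ[ℂ] H))ᗮ, (e v : H) = y ↑v) ∧
        ∀ v : (LinearMap.ker (y : H →ₗ[ℂ] H))ᗮ,
          compressOp (LinearMap.ker (y : H →ₗ[ℂ] H))ᗮ x v =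
            v + e.symm (restrictOp (LinearMap.range (y : H →ₗ[ℂ] H)) x hran (e v))) ∧
    spectrum ℂ (compressOp (LinearMap.ker (y : H →ₗ[ℂ] H))ᗮ x) =
      (fun z : ℂ => z + 1) '' spectrum ℂ (restrictOp (LinearMap.range (y : H →ₗ[ℂ] H)) x hran) :=
  intertwining_and_spectrum_shift_general x y hcomm hclosed hran
end

section
/- Assume H is finite dimensional, y² = 0, and let k = dim ker(y) and r = dim R(y) (so R(y) ⊆ ker(y)). Suppose e₁, …, e_k is a basis of ker(y) whose first r vectors e₁, …, e_r form a basis of R(y) and in which the matrix of the restriction of x to ker(y) is upper triangular with diagonal entries λ₁, …, λ_k. Then the set of λ ∈ ℂ for which the complex (C, d(λ)) fails to be exact equals {λ_i − 1 : 1 ≤ i ≤ k} ∪ {λ_i : r < i ≤ k} ∪ {λ_i + 1 : 1 ≤ i ≤ r}. (Equivalently, Sp((y,x),H) = {0} × ({λ_i − 1}_{1≤i≤k} ∪ {λ_i}_{r<i≤k} ∪ {λ_i + 1}_{1≤i≤r}).) -/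
/-!
`d₁(λ)` is injective iff `λ + 1` is not an eigenvalue of `x` on `ker y`, and `d₀(λ)` is onto iff
`λ` is not an eigenvalue of the map `x̄` induced by `x` on `H ⧸ R(y)`; the Euler characteristic
of the complex vanishes, so these two conditions already give exactness in the middle.
The triangular basis gives the characteristic polynomials of `x` on `ker y` and on `R(y)`.
That of `x̄` comes from comparing the two filtrations `R(y) ⊆ H` and `ker y ⊆ H`:
`y` identifies `H ⧸ ker y` with `R(y)` and turns `x` into `x + 1` (as `y x = (x + 1) y`), so
`χ(x|R(y)) · χ(x̄) = χ(x) = χ(x|ker y) · χ((x + 1)|R(y))`, and `χ(x|R(y))` cancels.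
-/

open Module Polynomial Submodule LinearMap

theorem Submodule.coe_mem_span_image_subtype_iff {R M : Type*} [Semiring R] [AddCommMonoid M]
    [Module R M] {p : Submodule R M} {s : Set p} {x : p} :
    (x : M) ∈ span R (p.subtype '' s) ↔ x ∈ span R s := by
  rw [← Submodule.map_span, ← SetLike.mem_coe, map_coe]
  exact p.injective_subtype.mem_set_image

namespace Module.End

section Triangular

variable {R M ι : Type*} [Ring R] [AddCommGroup M] [Module R M]

/-- The matrix of `f` in the family `v` is upper triangular with diagonal `d`. -/
def IsTriangular [LT ι] (f : End R M) (v : ι → M) (d : ι → R) : Prop :=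
  ∀ i, f (v i) - d i • v i ∈ span R (v '' {j | j < i})

theorem IsTriangular.add_one [LT ι] {f : End R M} {v : ι → M} {d : ι → R}
    (hf : f.IsTriangular v d) : (f + 1).IsTriangular v (fun i => d i + 1) := by
  intro i
  convert hf i using 1
  simp only [LinearMap.add_apply, Module.End.one_apply, add_smul, one_smul]
  abel

theorem IsTriangular.comp_subtype [Preorder ι] {f : End R M} {v : ι → M} {d : ι → R}
    (hf : f.IsTriangular v d) {s : Set ι} (hs : IsLowerSet s) :
    f.IsTriangular (fun i : s => v i) (fun i : s => d i) := by
  intro i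
  convert hf i using 3
  ext w
  constructor
  · rintro ⟨j, hj, rfl⟩
    exact ⟨j, hj, rfl⟩
  · rintro ⟨j, hj, rfl⟩
    exact ⟨⟨j, hs hj.le i.2⟩, hj, rfl⟩

end Triangular

section Field

variable {K V : Type*} [Field K] [AddCommGroup V] [Module K V]

theorem IsTriangular.charpoly_restrict [FiniteDimensional K V] {ι : Type*} [Fintype ι]
    [LinearOrder ι] {f : End K V} {v : ι → V} {d : ι → K} (hf : f.IsTriangular v d)
    (hv : LinearIndependent K v) {W : Submodule K V} (hvW : span K (Set.range v) = W)
    (hW : W ≤ W.comap f) :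
    (f.restrict hW).charpoly = ∏ i, (X - C (d i)) := by
  let b : Basis ι K W := (Basis.span hv).map (LinearEquiv.ofEq _ _ hvW)
  have hb : W.subtype ∘ b = v := funext fun i => by simp [b, Basis.span_apply]
  have hb_triangular : ∀ j, f.restrict hW (b j) - d j • b j ∈ span K (b '' {i | i < j}) := by
    intro j
    rw [← coe_mem_span_image_subtype_iff, ← Set.image_comp, hb]
    simpa [← hb] using hf j
  have hentry : ∀ i j, ¬ i < j →
      LinearMap.toMatrix b b (f.restrict hW) i j = if i = j then d j else 0 := by
    intro i j hij
    have hlow : b.repr (f.restrict hW (b j) - d j • b j) i = 0 :=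
      Finsupp.notMem_support_iff.1 fun hi => hij (b.mem_span_image.1 (hb_triangular j) hi)
    rw [map_sub, map_smul, Basis.repr_self, Finsupp.sub_apply, sub_eq_zero] at hlow
    rw [LinearMap.toMatrix_apply, hlow, Finsupp.smul_apply, Finsupp.single_apply]
    simp [eq_comm]
  rw [← LinearMap.charpoly_toMatrix _ b, Matrix.charpoly_of_isUpperTriangular]
  · simp [hentry]
  · intro i j hij
    rw [hentry i j (not_lt.2 hij.le)]
    exact if_neg (ne_of_gt hij)

theorem charpoly_eq_charpoly_restrict_mul_charpoly_mapQ [Infinite K] [FiniteDimensional K V]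
    (f : End K V) {W : Submodule K V} (hW : W ≤ W.comap f) :
    f.charpoly = (f.restrict hW).charpoly * (W.mapQ W f hW).charpoly := by
  refine Polynomial.funext fun t => ?_
  have ht : W ≤ W.comap (algebraMap K (End K V) t - f) := fun w hw =>
    W.sub_mem (W.smul_mem t hw) (hW hw)
  rw [eval_mul, eval_charpoly, eval_charpoly, eval_charpoly, det_eq_det_mul_det W _ ht]
  congr 2
  ext; simp

theorem injective_prod_iff_not_isRoot [FiniteDimensional K V] {f g : End K V}
    (hf : ker g ≤ (ker g).comap f) (μ : K) :
    Function.Injective ((μ • (1 : End K V) - f).prod g) ↔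
      ¬ (f.restrict hf).charpoly.IsRoot μ := by
  rw [← hasEigenvalue_iff_isRoot_charpoly, ← ker_eq_bot, ker_prod, ← neg_sub, ker_neg,
    hasEigenvalue_iff, not_not, eigenspace, genEigenspace_restrict, ← eigenspace, eigenspace_def,
    ← disjoint_iff_comap_eq_bot, disjoint_iff, inf_comm]

theorem surjective_coprod_iff_not_isRoot [FiniteDimensional K V] {f g : End K V}
    (hf : range g ≤ (range g).comap f) (μ : K) :
    Function.Surjective (g.coprod (f - μ • (1 : End K V))) ↔
      ¬ ((range g).mapQ (range g) f hf).charpoly.IsRoot μ := by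
  have hfμ : range g ≤ (range g).comap (f - μ • 1) := fun w hw =>
    (range g).sub_mem (hf hw) ((range g).smul_mem μ hw)
  have hmapQ : (range g).mapQ (range g) (f - μ • 1) hfμ = (range g).mapQ (range g) f hf - μ • 1 :=
    Submodule.linearMap_qext _ (by ext; simp)
  rw [← range_eq_top, range_coprod, ← map_mkQ_eq_top, ← range_mapQ _ _ _ hfμ, range_eq_top, hmapQ,
    ← LinearMap.injective_iff_surjective, ← hasEigenvalue_iff_isRoot_charpoly, hasEigenvalue_iff,
    eigenspace_def, not_not, ker_eq_bot]

end Field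

end Module.End

theorem LinearMap.ker_eq_range_of_injective_of_surjective {K U V W : Type*} [Field K]
    [AddCommGroup U] [Module K U] [AddCommGroup V] [Module K V] [AddCommGroup W] [Module K W]
    [FiniteDimensional K V] [FiniteDimensional K W]
    {d₁ : U →ₗ[K] V} {d₀ : V →ₗ[K] W} (hd : d₀ ∘ₗ d₁ = 0)
    (h₁ : Function.Injective d₁) (h₀ : Function.Surjective d₀)
    (hdim : finrank K U + finrank K W = finrank K V) : ker d₀ = range d₁ := by
  refine (Submodule.eq_of_le_of_finrank_le (range_le_ker_iff.2 hd) ?_).symm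
  have := finrank_range_add_finrank_ker d₀
  rw [range_eq_top.2 h₀, finrank_top, finrank_range_of_inj h₁] at *
  omega

namespace Module.End

section Commutator

variable {R M : Type*} [CommRing R] [AddCommGroup M] [Module R M]
variable {x y : End R M} (hcomm : y ∘ₗ x - x ∘ₗ y = y)
include hcomm

theorem apply_apply_of_commutator_eq (v : M) : y (x v) = x (y v) + y v := by
  have := LinearMap.congr_fun hcomm v
  simp only [LinearMap.sub_apply, LinearMap.comp_apply] at this
  exact sub_eq_iff_eq_add'.1 this

theorem ker_le_comap_ker_of_commutator_eq : ker y ≤ (ker y).comap x := fun v hv => by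
  simp_all [mem_ker, apply_apply_of_commutator_eq hcomm v]

theorem range_le_comap_range_of_commutator_eq : range y ≤ (range y).comap x := by
  rintro _ ⟨v, rfl⟩
  exact ⟨x v - v, by rw [map_sub, apply_apply_of_commutator_eq hcomm, add_sub_cancel_right]⟩

theorem range_le_comap_range_add_one_of_commutator_eq : range y ≤ (range y).comap (x + 1) := by
  rintro _ ⟨v, rfl⟩
  exact ⟨x v, by rw [apply_apply_of_commutator_eq hcomm]; rfl⟩

theorem quotKerEquivRange_conj_mapQ_of_commutator_eq :
    y.quotKerEquivRange.conj ((ker y).mapQ (ker y) x (ker_le_comap_ker_of_commutator_eq hcomm)) =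
      (x + 1).restrict (range_le_comap_range_add_one_of_commutator_eq hcomm) := by
  rw [LinearEquiv.conj_apply, LinearEquiv.comp_toLinearMap_symm_eq]
  refine Submodule.linearMap_qext _ (LinearMap.ext fun v => Subtype.ext ?_)
  simp [apply_apply_of_commutator_eq hcomm]

theorem coprod_comp_prod_of_commutator_eq (l : R) :
    y.coprod (x - l • 1) ∘ₗ (-(x - 1 - l • 1)).prod y = 0 := by
  ext v
  simp [apply_apply_of_commutator_eq hcomm]

end Commutator

section FieldCommutator

variable {K V : Type*} [Field K] [AddCommGroup V] [Module K V]
variable {x y : End K V} (hcomm : y ∘ₗ x - x ∘ₗ y = y)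
include hcomm

theorem charpoly_restrict_range_mul_charpoly_mapQ_range_of_commutator_eq [Infinite K]
    [FiniteDimensional K V] :
    (x.restrict (range_le_comap_range_of_commutator_eq hcomm)).charpoly *
        ((range y).mapQ (range y) x (range_le_comap_range_of_commutator_eq hcomm)).charpoly =
      (x.restrict (ker_le_comap_ker_of_commutator_eq hcomm)).charpoly *
        ((x + 1).restrict (range_le_comap_range_add_one_of_commutator_eq hcomm)).charpoly := by
  rw [← charpoly_eq_charpoly_restrict_mul_charpoly_mapQ,
    charpoly_eq_charpoly_restrict_mul_charpoly_mapQ x (ker_le_comap_ker_of_commutator_eq hcomm),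
    ← quotKerEquivRange_conj_mapQ_of_commutator_eq hcomm, LinearEquiv.charpoly_conj]

theorem exact_iff_injective_and_surjective_of_commutator_eq [FiniteDimensional K V] (l : K) :
    (Function.Injective ((-(x - 1 - l • (1 : End K V))).prod y) ∧
        ker (y.coprod (x - l • (1 : End K V))) = range ((-(x - 1 - l • (1 : End K V))).prod y) ∧
        Function.Surjective (y.coprod (x - l • (1 : End K V)))) ↔
      Function.Injective ((-(x - 1 - l • (1 : End K V))).prod y) ∧
        Function.Surjective (y.coprod (x - l • (1 : End K V))) :=
  ⟨fun h => ⟨h.1, h.2.2⟩, fun h => ⟨h.1, ker_eq_range_of_injective_of_surjective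
    (coprod_comp_prod_of_commutator_eq hcomm l) h.1 h.2 finrank_prod.symm, h.2⟩⟩

end FieldCommutator

end Module.End

open Module.End

theorem joint_spectrum_finite_dimensional_general
    {H : Type*} [NormedAddCommGroup H] [InnerProductSpace ℂ H] [FiniteDimensional ℂ H]
    (x y : H →ₗ[ℂ] H) (hcomm : y ∘ₗ x - x ∘ₗ y = y)
    (k r : ℕ)
    (e : Fin k → H)
    (he_indep : LinearIndependent ℂ e)
    (he_span : Submodule.span ℂ (Set.range e) = LinearMap.ker y)
    (he_span_range :
      Submodule.span ℂ (e '' {i : Fin k | (i : ℕ) < r}) = LinearMap.range y)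
    (lam : Fin k → ℂ)
    (htriangular : ∀ i : Fin k,
      x (e i) - lam i • e i ∈ Submodule.span ℂ (e '' {j : Fin k | j < i})) :
    {l : ℂ |
        ¬ (Function.Injective ⇑((-(x - 1 - l • (1 : H →ₗ[ℂ] H))).prod y) ∧
          LinearMap.ker (y.coprod (x - l • (1 : H →ₗ[ℂ] H))) =
            LinearMap.range ((-(x - 1 - l • (1 : H →ₗ[ℂ] H))).prod y) ∧
          Function.Surjective ⇑(y.coprod (x - l • (1 : H →ₗ[ℂ] H))))} =
      (Set.range fun i : Fin k => lam i - 1) ∪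
      {z : ℂ | ∃ i : Fin k, r ≤ (i : ℕ) ∧ z = lam i} ∪
      {z : ℂ | ∃ i : Fin k, (i : ℕ) < r ∧ z = lam i + 1} := by
  have hK := ker_le_comap_ker_of_commutator_eq hcomm
  have hR := range_le_comap_range_of_commutator_eq hcomm
  let s : Set (Fin k) := {i | (i : ℕ) < r}
  have htriR : IsTriangular x (fun i : s => e i) (fun i : s => lam i) :=
    IsTriangular.comp_subtype htriangular fun i j hji (hi : (i : ℕ) < r) =>
      lt_of_le_of_lt (Fin.le_def.1 hji) hi
  have heR : LinearIndependent ℂ (fun i : s => e i) := he_indep.comp _ Subtype.val_injective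
  have hspanR : span ℂ (Set.range fun i : s => e i) = range y := by
    rw [← he_span_range, Set.image_eq_range]
  have hpK : (x.restrict hK).charpoly = ∏ i, (X - C (lam i)) :=
    IsTriangular.charpoly_restrict htriangular he_indep he_span hK
  have hpQ : ((range y).mapQ (range y) x hR).charpoly =
      (∏ i : {i : Fin k // ¬ (i : ℕ) < r}, (X - C (lam i))) * ∏ i : s, (X - C (lam i + 1)) := by
    have := charpoly_restrict_range_mul_charpoly_mapQ_range_of_commutator_eq hcomm
    rw [htriR.charpoly_restrict heR hspanR hR, hpK, htriR.add_one.charpoly_restrict heR hspanR,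
      ← Fintype.prod_subtype_mul_prod_subtype (fun i : Fin k => (i : ℕ) < r), mul_assoc] at this
    exact mul_left_cancel₀ (monic_prod_of_monic _ _ fun i _ => monic_X_sub_C _).ne_zero this
  have hd₁_fst : ∀ l : ℂ, -(x - 1 - l • (1 : End ℂ H)) = (l + 1) • 1 - x := fun l => by
    rw [add_smul, one_smul]; abel
  ext l
  rw [Set.mem_ofPred_eq, exact_iff_injective_and_surjective_of_commutator_eq hcomm, hd₁_fst,
    injective_prod_iff_not_isRoot hK, surjective_coprod_iff_not_isRoot hR, hpK, hpQ]
  simp only [isRoot_prod, root_mul, root_X_sub_C, Finset.mem_univ, true_and, Set.mem_union,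
    Set.mem_range, Set.mem_ofPred_eq, Subtype.exists, exists_prop, not_lt, not_and_or, not_not,
    sub_eq_iff_eq_add, eq_comm (a := l), s, or_assoc]

/-- Let `H` be a finite-dimensional complex inner product space and let
`x, y` be linear operators on `H` with `y ∘ x - x ∘ y = y` and `y² = 0`.  Set
`k = dim ker y` and `r = dim R(y)`.  Suppose `e₁, …, e_k` is a basis of `ker y` whose first
`r` vectors form a basis of `R(y)`, in which the restriction of `x` to `ker y` is upper
triangular with diagonal entries `λ₁, …, λ_k`.  Then the set of `λ ∈ ℂ` at which the
complex `0 → H →d₁(λ) H ⊕ H →d₀(λ) H → 0` fails to be exact equals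
`{λᵢ - 1 : 1 ≤ i ≤ k} ∪ {λᵢ : r < i ≤ k} ∪ {λᵢ + 1 : 1 ≤ i ≤ r}`. -/
theorem joint_spectrum_finite_dimensional
    {H : Type*} [NormedAddCommGroup H] [InnerProductSpace ℂ H] [FiniteDimensional ℂ H]
    (x y : H →ₗ[ℂ] H) (hcomm : y ∘ₗ x - x ∘ₗ y = y) (hy2 : y ∘ₗ y = 0)
    (k r : ℕ)
    (hk : k = Module.finrank ℂ (LinearMap.ker y))
    (hr : r = Module.finrank ℂ (LinearMap.range y))
    (e : Fin k → H)
    (he_ker : ∀ i, e i ∈ LinearMap.ker y)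
    (he_indep : LinearIndependent ℂ e)
    (he_span : Submodule.span ℂ (Set.range e) = LinearMap.ker y)
    (he_mem_range : ∀ i : Fin k, (i : ℕ) < r → e i ∈ LinearMap.range y)
    (he_span_range :
      Submodule.span ℂ (e '' {i : Fin k | (i : ℕ) < r}) = LinearMap.range y)
    (lam : Fin k → ℂ)
    (htriangular : ∀ i : Fin k,
      x (e i) - lam i • e i ∈ Submodule.span ℂ (e '' {j : Fin k | j < i})) :
    {l : ℂ |
        ¬ (Function.Injective ⇑((-(x - 1 - l • (1 : H →ₗ[ℂ] H))).prod y) ∧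
          LinearMap.ker (y.coprod (x - l • (1 : H →ₗ[ℂ] H))) =
            LinearMap.range ((-(x - 1 - l • (1 : H →ₗ[ℂ] H))).prod y) ∧
          Function.Surjective ⇑(y.coprod (x - l • (1 : H →ₗ[ℂ] H))))} =
      (Set.range fun i : Fin k => lam i - 1) ∪
      {z : ℂ | ∃ i : Fin k, r ≤ (i : ℕ) ∧ z = lam i} ∪
      {z : ℂ | ∃ i : Fin k, (i : ℕ) < r ∧ z = lam i + 1} :=
  joint_spectrum_finite_dimensional_general x y hcomm k r e he_indep he_span he_span_range lam
    htriangular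
end
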